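/- Let 0 < μ₂ < μ < 1 and define C₁(μ, μ₂) = (μ − μ₂)²/(2μ(1 − μ₂)). Then for every μ₃ with 0 ≤ μ₃ ≤ μ₂, we have D_KL(μ₃, μ) − D_KL(μ₃, μ₂) ≥ C₁(μ, μ₂) > 0, where D_KL(p, q) = p·log(p/q) + (1−p)·log((1−p)/(1−q)) is the KL divergence between Bernoulli distributions (with the convention 0·log 0 = 0). -/

import Mathlib

noncomputable def klBin (p q : ℝ) : ℝ :=
  p * Real.log (p / q) + (1 - p) * Real.log ((1 - p) / (1 - q))

open Real Set in
lemma klBin_key (p q : ℝ) (hp : 0 < p) (hpq : p < q) (hq : q < 1) :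
    klBin p q ≥ (q - p) ^ 2 / (2 * q * (1 - p)) := by
  have hp1 : p < 1 := hpq.trans hq
  have hq0 : 0 < q := hp.trans hpq
  have h1p : 0 < 1 - p := by linarith
  have h1q : 0 < 1 - q := by linarith
  set f : ℝ → ℝ := fun t =>
    p * Real.log p - p * Real.log t + (1 - p) * Real.log (1 - p)
      - (1 - p) * Real.log (1 - t) - (t - p) ^ 2 / (2 * q * (1 - p)) with hf
  have hderiv : ∀ t ∈ Ioo p q, HasDerivAt f
      (-(p / t) + (1 - p) / (1 - t) - (t - p) / (q * (1 - p))) t := by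
    intro t ht
    have ht0 : 0 < t := hp.trans ht.1
    have ht1 : t < 1 := ht.2.trans hq
    have h1 : HasDerivAt (fun t : ℝ => Real.log t) t⁻¹ t :=
      Real.hasDerivAt_log (ne_of_gt ht0)
    have h2 : HasDerivAt (fun t : ℝ => Real.log (1 - t)) (-(1 - t)⁻¹) t := by
      have := (Real.hasDerivAt_log (ne_of_gt (by linarith : (0:ℝ) < 1 - t))).comp t
        ((hasDerivAt_id t).const_sub 1)
      simp at this
      exact this
    have h3 : HasDerivAt (fun t : ℝ => (t - p) ^ 2 / (2 * q * (1 - p)))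
        (2 * (t - p) / (2 * q * (1 - p))) t := by
      have := (((hasDerivAt_id t).sub_const p).pow 2).div_const (2 * q * (1 - p))
      simpa using this
    have := (((((hasDerivAt_const t (p * Real.log p)).sub (h1.const_mul p)).add
      (hasDerivAt_const t ((1 - p) * Real.log (1 - p)))).sub
      (h2.const_mul (1 - p))).sub h3)
    refine this.congr_deriv ?_
    have hq' : q * (1 - p) ≠ 0 := by positivity
    field_simp
    ring
  have hmono : MonotoneOn f (Icc p q) := by
    apply monotoneOn_of_deriv_nonneg (convex_Icc p q)
    · apply ContinuousOn.sub
      apply ContinuousOn.sub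
      apply ContinuousOn.add
      apply ContinuousOn.sub
      · exact continuousOn_const
      · exact (continuousOn_const.mul ((Real.continuousOn_log.comp continuousOn_id (fun x hx => by
          have : 0 < x := lt_of_lt_of_le hp hx.1
          simpa using ne_of_gt this))))
      · exact continuousOn_const
      · refine continuousOn_const.mul (Real.continuousOn_log.comp
          (continuousOn_const.sub continuousOn_id) (fun x hx => ?_))
        have : x < 1 := lt_of_le_of_lt hx.2 hq
        simpa using ne_of_gt (by linarith : (0:ℝ) < 1 - x)
      · exact ((continuousOn_id.sub continuousOn_const).pow 2).div_const _
    · rw [interior_Icc]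
      intro x hx
      exact (hderiv x hx).differentiableAt.differentiableWithinAt
    · rw [interior_Icc]
      intro x hx
      rw [(hderiv x hx).deriv]
      have hx0 : 0 < x := hp.trans hx.1
      have hx1 : x < 1 := hx.2.trans hq
      have h1x : 0 < 1 - x := by linarith
      have key : -(p / x) + (1 - p) / (1 - x) = (x - p) / (x * (1 - x)) := by
        field_simp
        ring
      rw [key]
      have hden : x * (1 - x) ≤ q * (1 - p) :=
        mul_le_mul hx.2.le (by linarith [hx.1]) h1x.le hq0.le
      have : (x - p) / (q * (1 - p)) ≤ (x - p) / (x * (1 - x)) :=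
        div_le_div_of_nonneg_left (by linarith [hx.1]) (by positivity) hden
      linarith
  have hfp : f p = 0 := by simp [hf]
  have hle : f p ≤ f q := hmono (left_mem_Icc.mpr hpq.le) (right_mem_Icc.mpr hpq.le) hpq.le
  have hfq : f q = klBin p q - (q - p) ^ 2 / (2 * q * (1 - p)) := by
    simp only [hf, klBin]
    rw [Real.log_div (ne_of_gt hp) (ne_of_gt hq0),
      Real.log_div (ne_of_gt h1p) (ne_of_gt h1q)]
    ring
  rw [hfp, hfq] at hle
  linarith

theorem stmt_10 (μ μ₂ : ℝ) (h0 : 0 < μ₂) (h1 : μ₂ < μ) (h2 : μ < 1)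
    (C₁ : ℝ) (hC₁ : C₁ = (μ - μ₂) ^ 2 / (2 * μ * (1 - μ₂))) :
    0 < C₁ ∧ ∀ μ₃, 0 ≤ μ₃ → μ₃ ≤ μ₂ → klBin μ₃ μ - klBin μ₃ μ₂ ≥ C₁ := by
  have hμ0 : 0 < μ := h0.trans h1
  have h1μ : 0 < 1 - μ := by linarith
  have h1μ₂ : 0 < 1 - μ₂ := by linarith
  constructor
  · rw [hC₁]
    exact div_pos (pow_pos (by linarith) 2) (by positivity)
  intro μ₃ h3 h4
  have h3lt1 : μ₃ < 1 := lt_of_le_of_lt h4 (h1.trans h2)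
  have h1μ₃ : 0 < 1 - μ₃ := by linarith
  -- linear form of the difference
  have hdiff : klBin μ₃ μ - klBin μ₃ μ₂ =
      μ₃ * (Real.log μ₂ - Real.log μ) + (1 - μ₃) * (Real.log (1 - μ₂) - Real.log (1 - μ)) := by
    unfold klBin
    rcases eq_or_lt_of_le h3 with h | h
    · subst h
      simp
      ring
    · rw [Real.log_div (ne_of_gt h) (ne_of_gt hμ0), Real.log_div (ne_of_gt h) (ne_of_gt h0),
        Real.log_div (ne_of_gt h1μ₃) (ne_of_gt h1μ), Real.log_div (ne_of_gt h1μ₃) (ne_of_gt h1μ₂)]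
      ring
  rw [hdiff]
  -- monotone in μ₃: slope nonpositive
  have hlog1 : Real.log μ₂ - Real.log μ ≤ 0 := by
    have := Real.log_le_log h0 h1.le
    linarith
  have hlog2 : 0 ≤ Real.log (1 - μ₂) - Real.log (1 - μ) := by
    have := Real.log_le_log h1μ (by linarith : 1 - μ ≤ 1 - μ₂)
    linarith
  have hslope : (Real.log μ₂ - Real.log μ) - (Real.log (1 - μ₂) - Real.log (1 - μ)) ≤ 0 := by
    linarith
  have hmin : μ₃ * (Real.log μ₂ - Real.log μ) + (1 - μ₃) * (Real.log (1 - μ₂) - Real.log (1 - μ))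
      ≥ μ₂ * (Real.log μ₂ - Real.log μ) + (1 - μ₂) * (Real.log (1 - μ₂) - Real.log (1 - μ)) := by
    nlinarith [mul_le_mul_of_nonpos_right h4 hslope]
  have hkl : μ₂ * (Real.log μ₂ - Real.log μ) + (1 - μ₂) * (Real.log (1 - μ₂) - Real.log (1 - μ))
      = klBin μ₂ μ := by
    unfold klBin
    rw [Real.log_div (ne_of_gt h0) (ne_of_gt hμ0),
      Real.log_div (ne_of_gt h1μ₂) (ne_of_gt h1μ)]
  have hthis := klBin_key μ₂ μ h0 h1 h2
  have h5 : μ₂ * (Real.log μ₂ - Real.log μ) + (1 - μ₂) * (Real.log (1 - μ₂) - Real.log (1 - μ))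
      ≥ (μ - μ₂) ^ 2 / (2 * μ * (1 - μ₂)) := by rw [hkl]; exact hthis
  rw [hC₁]
  linarith
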